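/- arXiv:1708.03274 — 7 statements merged into one kernel-verified Lean document; each statement's English description precedes it below -/
import Mathlib

section
/- In the discrete churn model, for every natural number i, the total number of nodes that enter during the first i intervals is at most ((1+α)^i − 1)·N(0); that is, ∑_{j<i} e(j) ≤ ((1+α)^i − 1)·N(0). -/
/-- Discrete churn model, Lemma 1 (enter bound): the total number of nodes
entering during the first `i` intervals is at most `((1+α)^i − 1)·N(0)`. -/
theorem churn_enter_bound
    (α : ℝ) (N e ℓ : ℕ → ℝ)
    (hα0 : 0 ≤ α) (hα1 : α < 1)
    (hN0 : 0 ≤ N 0)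
    (he : ∀ k, 0 ≤ e k) (hℓ : ∀ k, 0 ≤ ℓ k)
    (hrec : ∀ k, N (k + 1) = N k + e k - ℓ k)
    (hchurn : ∀ k, e k + ℓ k ≤ α * N k)
    (i : ℕ) :
    ∑ j ∈ Finset.range i, e j ≤ ((1 + α) ^ i - 1) * N 0 := by
  have hNk : ∀ k, N k ≤ (1 + α) ^ k * N 0 := by
    intro k
    induction k with
    | zero => simp
    | succ n ih =>
      have h1 : N (n + 1) ≤ (1 + α) * N n := by
        have := hchurn n
        have := hℓ n
        rw [hrec n]; nlinarith
      calc N (n + 1) ≤ (1 + α) * N n := h1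
        _ ≤ (1 + α) * ((1 + α) ^ n * N 0) := by
            apply mul_le_mul_of_nonneg_left ih; linarith
        _ = (1 + α) ^ (n + 1) * N 0 := by ring
  have key : ∀ k, e k ≤ α * ((1 + α) ^ k * N 0) := by
    intro k
    have h1 : e k ≤ α * N k := by have := hchurn k; have := hℓ k; linarith
    have h2 : α * N k ≤ α * ((1 + α) ^ k * N 0) :=
      mul_le_mul_of_nonneg_left (hNk k) hα0
    linarith
  calc ∑ j ∈ Finset.range i, e j
      ≤ ∑ j ∈ Finset.range i, α * ((1 + α) ^ j * N 0) :=
        Finset.sum_le_sum fun j _ => key j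
    _ = ((1 + α) ^ i - 1) * N 0 := by
        induction i with
        | zero => simp
        | succ n ih => rw [Finset.sum_range_succ, ih]; ring
end

section
/- In the discrete churn model with 0 < α < 1, for every natural number i such that (1−α)^i ≥ 1/2 (equivalently, i ≤ −1/log₂(1−α)), the total number of nodes that leave during the first i intervals satisfies ∑_{j<i} ℓ(j) ≤ (1 − (1−α)^i)·N(0). -/
/-- Discrete churn model, Lemma 2 (leave bound): if `(1−α)^i ≥ 1/2`
(equivalently `i ≤ −1/log₂(1−α)`), then the total number of nodes leaving
during the first `i` intervals is at most `(1 − (1−α)^i)·N(0)`. -/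
theorem churn_leave_bound
    (α : ℝ) (N e ℓ : ℕ → ℝ)
    (hα0 : 0 < α) (hα1 : α < 1)
    (hN0 : 0 ≤ N 0)
    (he : ∀ k, 0 ≤ e k) (hℓ : ∀ k, 0 ≤ ℓ k)
    (hrec : ∀ k, N (k + 1) = N k + e k - ℓ k)
    (hchurn : ∀ k, e k + ℓ k ≤ α * N k)
    (i : ℕ) (hi : (1 / 2 : ℝ) ≤ (1 - α) ^ i) :
    ∑ j ∈ Finset.range i, ℓ j ≤ (1 - (1 - α) ^ i) * N 0 := by
  -- nonnegativity of N
  have hNpos : ∀ k, 0 ≤ N k := by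
    intro k
    induction k with
    | zero => exact hN0
    | succ n ih =>
      have hc := hchurn n
      have he' := he n
      have hl' := hℓ n
      rw [hrec n]
      nlinarith
  -- shifted auxiliary bound, by induction on the number of intervals
  have aux : ∀ m : ℕ, (1 / 2 : ℝ) ≤ (1 - α) ^ m →
      ∀ s : ℕ, ∑ j ∈ Finset.range m, ℓ (s + j) ≤ (1 - (1 - α) ^ m) * N s := by
    intro m
    induction m with
    | zero => intro _ s; simp
    | succ n ih =>
      intro hcond s
      have hq0 : (0:ℝ) ≤ 1 - α := by linarith
      have hq1 : (1 - α : ℝ) ≤ 1 := by linarith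
      have hxm0 : (0:ℝ) ≤ (1 - α) ^ n := by positivity
      -- (1-α)^(n+1) ≤ (1-α)^n
      have hmono : ((1 - α) ^ (n+1) : ℝ) ≤ (1 - α) ^ n := by
        calc ((1 - α) ^ (n+1) : ℝ) = (1 - α) * (1 - α) ^ n := by ring
        _ ≤ 1 * (1 - α) ^ n := by nlinarith
        _ = (1 - α) ^ n := by ring
      have hcond' : (1 / 2 : ℝ) ≤ (1 - α) ^ n := le_trans hcond hmono
      have key := ih hcond' (s + 1)
      have hsum : ∑ j ∈ Finset.range (n+1), ℓ (s + j)
          = ℓ s + ∑ j ∈ Finset.range n, ℓ (s + 1 + j) := by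
        rw [Finset.sum_range_succ']
        simp only [Nat.add_zero]
        rw [add_comm]
        congr 1
        apply Finset.sum_congr rfl
        intro j _
        congr 1
        omega
      rw [hsum]
      have hrecs := hrec s
      have hcs := hchurn s
      have hes := he s
      have hls := hℓ s
      have hNs := hNpos s
      -- sum ≤ ℓ s + (1 - (1-α)^n) * N (s+1)
      have h1 : ℓ s + ∑ j ∈ Finset.range n, ℓ (s + 1 + j)
          ≤ ℓ s + (1 - (1 - α) ^ n) * N (s + 1) := by linarith
      refine h1.trans ?_
      rw [hrecs]
      -- remaining: ℓ s + (1 - x)*(N s + e s - ℓ s) ≤ (1 - (1-α)*x)*N s  where x = (1-α)^n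
      have hxpow : ((1 - α) ^ (n+1) : ℝ) = (1 - α) * (1 - α) ^ n := by ring
      rw [hxpow]
      nlinarith [mul_nonneg hxm0 hes, mul_nonneg hxm0 hls]
  have := aux i hi 0
  simpa using this
end

section
/- Let α, N, L be real numbers and i a natural number with 0 ≤ α < 1, N ≥ 0, 0 ≤ L ≤ α·N, and 2·(1−α)^i ≥ 1. Then L + (1 − (1−α)^i)·((1+α)·N − 2·L) ≤ (1 − (1−α)^{i+1})·N. -/
/-- The key arithmetic inequality in the inductive step of the paper's Lemma 2. -/
theorem leave_bound_inductive_step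
    (α N L : ℝ) (i : ℕ)
    (hα0 : 0 ≤ α) (hα1 : α < 1)
    (hN : 0 ≤ N)
    (hL0 : 0 ≤ L) (hL : L ≤ α * N)
    (hi : 1 ≤ 2 * (1 - α) ^ i) :
    L + (1 - (1 - α) ^ i) * ((1 + α) * N - 2 * L) ≤ (1 - (1 - α) ^ (i + 1)) * N := by
  have key : 0 ≤ (2 * (1 - α) ^ i - 1) * (α * N - L) :=
    mul_nonneg (by linarith) (by linarith)
  have : (1 - α) ^ (i + 1) = (1 - α) ^ i * (1 - α) := pow_succ _ _
  nlinarith [key]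
end

section
/- Let α, Δ, γ, Nmin, s be real numbers with 0 ≤ α < 1, Δ ≥ 0, s ≥ Nmin > 0, and γ ≥ 1/(Nmin·(1−α)^3) + (1+Δ)·(1+α)^3/(1−α)^3 − 1. Let R and B be finite sets with |R| ≥ γ·(1−α)^3·s and |B| ≤ (((1+α)^3 − 1) + (1 − (1−α)^3) + Δ·(1+α)^3)·s (cardinalities regarded as real numbers). Then |R| − |B| ≥ ((1+γ)·(1−α)^3 − (1+Δ)·(1+α)^3)·s ≥ 1, and hence there exists an element of R that is not in B. -/
/-- Counting core of the paper's Lemma 7 and Lemma 13: at least one enter-echo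
message comes from a node not in the bad set `B`. -/
theorem enter_echo_from_good_node
    {ι : Type*} [DecidableEq ι]
    (α Δ γ Nmin s : ℝ)
    (hα0 : 0 ≤ α) (hα1 : α < 1) (hΔ : 0 ≤ Δ)
    (hNmin : 0 < Nmin) (hs : Nmin ≤ s)
    (hγ : 1 / (Nmin * (1 - α) ^ 3) + (1 + Δ) * (1 + α) ^ 3 / (1 - α) ^ 3 - 1 ≤ γ)
    (R B : Finset ι)
    (hR : γ * (1 - α) ^ 3 * s ≤ (R.card : ℝ))
    (hB : (B.card : ℝ) ≤ (((1 + α) ^ 3 - 1) + (1 - (1 - α) ^ 3) + Δ * (1 + α) ^ 3) * s) :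
    (((1 + γ) * (1 - α) ^ 3 - (1 + Δ) * (1 + α) ^ 3) * s ≤ (R.card : ℝ) - B.card ∧
      1 ≤ ((1 + γ) * (1 - α) ^ 3 - (1 + Δ) * (1 + α) ^ 3) * s) ∧
      ∃ x ∈ R, x ∉ B := by
  have hca : 0 < 1 - α := by linarith
  have hc : 0 < (1 - α) ^ 3 := by positivity
  have hs0 : 0 < s := lt_of_lt_of_le hNmin hs
  have h1 : ((1 + γ) * (1 - α) ^ 3 - (1 + Δ) * (1 + α) ^ 3) * s ≤ (R.card : ℝ) - B.card := by
    nlinarith [hR, hB]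
  have hinv : 1 / (Nmin * (1 - α) ^ 3) = 1 / Nmin / (1 - α) ^ 3 := by
    rw [div_div]
  have hγ' : 1 / Nmin + (1 + Δ) * (1 + α) ^ 3 ≤ (1 + γ) * (1 - α) ^ 3 := by
    rw [hinv] at hγ
    have h := mul_le_mul_of_nonneg_right hγ hc.le
    rw [sub_mul, add_mul, div_mul_cancel₀ _ hc.ne', div_mul_cancel₀ _ hc.ne'] at h
    nlinarith [h]
  have hsN : (1:ℝ) ≤ s / Nmin := (one_le_div hNmin).mpr hs
  have h2 : 1 ≤ ((1 + γ) * (1 - α) ^ 3 - (1 + Δ) * (1 + α) ^ 3) * s := by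
    have : 1 / Nmin * s ≤ ((1 + γ) * (1 - α) ^ 3 - (1 + Δ) * (1 + α) ^ 3) * s := by
      nlinarith [hγ']
    have h3 : (1:ℝ) ≤ 1 / Nmin * s := by
      rw [one_div, inv_mul_eq_div]; exact hsN
    linarith
  refine ⟨⟨h1, h2⟩, ?_⟩
  by_contra h
  push_neg at h
  have hsub : R ⊆ B := fun x hx => h x hx
  have : (R.card : ℝ) ≤ B.card := by exact_mod_cast Finset.card_le_card hsub
  linarith
end

section
/- In the discrete churn model with 0 < α < 1, let k be a natural number with (1−α)^k ≥ 1/2, and let P be a real number satisfying N(0) − ∑_{j<k} ℓ(j) ≤ P ≤ N(0) + ∑_{j<k} e(j). Then (1−α)^k·N(0) ≤ P ≤ (1+α)^k·N(0). -/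
/-- Common counting core of the paper's Lemma 8 and Lemma 9: a node's estimate
`P` of the system size is within factors `(1−α)^k` and `(1+α)^k` of the true
system size `k` intervals earlier. -/
theorem estimate_sandwich
    (α : ℝ) (N e ℓ : ℕ → ℝ)
    (hα0 : 0 < α) (hα1 : α < 1)
    (hN0 : 0 ≤ N 0)
    (he : ∀ k, 0 ≤ e k) (hℓ : ∀ k, 0 ≤ ℓ k)
    (hrec : ∀ k, N (k + 1) = N k + e k - ℓ k)
    (hchurn : ∀ k, e k + ℓ k ≤ α * N k)
    (k : ℕ) (hk : (1 / 2 : ℝ) ≤ (1 - α) ^ k)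
    (P : ℝ)
    (hPlo : N 0 - ∑ j ∈ Finset.range k, ℓ j ≤ P)
    (hPhi : P ≤ N 0 + ∑ j ∈ Finset.range k, e j) :
    (1 - α) ^ k * N 0 ≤ P ∧ P ≤ (1 + α) ^ k * N 0 := by
  -- Backward induction: the total leaves over the next `t ≤ k` intervals
  -- starting at time `j` are at most `(1 - (1-α)^t) * N j`.
  have aux_lo : ∀ t : ℕ, t ≤ k → ∀ j : ℕ,
      ∑ i ∈ Finset.range t, ℓ (j + i) ≤ (1 - (1 - α) ^ t) * N j := by
    intro t
    induction t with
    | zero => intro _ j; simp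
    | succ t ih =>
      intro ht j
      have ht' : t ≤ k := Nat.le_of_succ_le ht
      have hxt : (1 / 2 : ℝ) ≤ (1 - α) ^ t :=
        le_trans hk (pow_le_pow_of_le_one (by linarith) (by linarith) ht')
      have hsum : ∑ i ∈ Finset.range (t + 1), ℓ (j + i)
          = ∑ i ∈ Finset.range t, ℓ ((j + 1) + i) + ℓ j := by
        rw [Finset.sum_range_succ']
        congr 1
        exact Finset.sum_congr rfl fun i _ => by congr 1; omega
      rw [hsum, pow_succ]
      have hIH := ih ht' (j + 1)
      have hrecj := hrec j
      have hcj := hchurn j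
      have hej := he j
      have hlj := hℓ j
      have hxnn : (0 : ℝ) ≤ (1 - α) ^ t := by linarith
      nlinarith [mul_le_mul_of_nonneg_left hcj hxnn,
        mul_nonneg (by linarith : (0 : ℝ) ≤ 2 * (1 - α) ^ t - 1) hej]
  -- Forward induction: nonnegativity and the `(1+α)^m` growth bounds.
  have aux_hi : ∀ m : ℕ, 0 ≤ N m ∧ N m ≤ (1 + α) ^ m * N 0 ∧
      N 0 + ∑ j ∈ Finset.range m, e j ≤ (1 + α) ^ m * N 0 := by
    intro m
    induction m with
    | zero => refine ⟨hN0, by simp, by simp⟩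
    | succ m ih =>
      obtain ⟨h1, h2, h3⟩ := ih
      have hrecm := hrec m
      have hcm := hchurn m
      have hem := he m
      have hlm := hℓ m
      have hpnn : (0 : ℝ) ≤ (1 + α) ^ m := pow_nonneg (by linarith) m
      refine ⟨?_, ?_, ?_⟩
      · nlinarith [mul_nonneg (by linarith : (0 : ℝ) ≤ 1 - α) h1]
      · rw [pow_succ]
        nlinarith [mul_le_mul_of_nonneg_left h2 (by linarith : (0 : ℝ) ≤ α)]
      · rw [Finset.sum_range_succ, pow_succ]
        nlinarith [mul_le_mul_of_nonneg_left h2 (by linarith : (0 : ℝ) ≤ α)]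
  have hL := aux_lo k le_rfl 0
  simp only [zero_add] at hL
  have hE := (aux_hi k).2.2
  constructor
  · nlinarith [hL, hPlo]
  · linarith [hE, hPhi]
end

section
/- Let α, Δ, β, N₂, N₄ be real numbers with 0 ≤ α < 1, Δ ≥ 0, N₂ > 0, N₄ ≥ N₂/(1−α)^2, and β > ((1+Δ)·(1+α)^3 − (1−α)^3 + 1)·(1+α)^2/((2 − 2α + α^2)·(1−α)^2). Then β·(1−α)^4·N₄ + β·(1−α)^4·N₄/(1+α)^2 − (1 − (1−α)^3 + Δ·(1+α)^3)·N₂ > (1+α)^3·N₂. -/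
/-- Arithmetic inequality at the heart of Case II of the paper's Lemma 14
(lem:lin5): `|Q_r| + |K| > |J|`. -/
theorem quorum_intersection_arith
    (α Δ β N₂ N₄ : ℝ)
    (hα0 : 0 ≤ α) (hα1 : α < 1) (hΔ : 0 ≤ Δ)
    (hN₂ : 0 < N₂) (hN₄ : N₂ / (1 - α) ^ 2 ≤ N₄)
    (hβ : ((1 + Δ) * (1 + α) ^ 3 - (1 - α) ^ 3 + 1) * (1 + α) ^ 2 /
        ((2 - 2 * α + α ^ 2) * (1 - α) ^ 2) < β) :
    (1 + α) ^ 3 * N₂ <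
      β * (1 - α) ^ 4 * N₄ + β * (1 - α) ^ 4 * N₄ / (1 + α) ^ 2 -
        (1 - (1 - α) ^ 3 + Δ * (1 + α) ^ 3) * N₂ := by
  have hm : (0:ℝ) < 1 - α := by linarith
  have hp : (0:ℝ) < 1 + α := by linarith
  have hp2 : (0:ℝ) < (1 + α) ^ 2 := by positivity
  have hm2 : (0:ℝ) < (1 - α) ^ 2 := by positivity
  have hden : (0:ℝ) < (2 - 2 * α + α ^ 2) * (1 - α) ^ 2 := by nlinarith
  rw [div_lt_iff₀ hden] at hβ
  rw [div_le_iff₀ hm2] at hN₄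
  have hβpos : 0 < β := by
    nlinarith [mul_nonneg hΔ (pow_pos hp 3).le,
      pow_le_pow_left₀ hm.le (by linarith : 1 - α ≤ 1 + α) 3,
      pow_pos hp 2, pow_pos hp 3]
  set q := β * (1 - α) ^ 4 * N₄ / (1 + α) ^ 2 with hqdef
  have hq : q * (1 + α) ^ 2 = β * (1 - α) ^ 4 * N₄ :=
    div_mul_cancel₀ _ (ne_of_gt hp2)
  -- β * (1-α)^4 * N₄ ≥ β * (1-α)^2 * N₂
  have key : β * (1 - α) ^ 2 * N₂ ≤ β * (1 - α) ^ 4 * N₄ := by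
    nlinarith [mul_le_mul_of_nonneg_left hN₄ (mul_nonneg hβpos.le hm2.le)]
  have key2 : β * (1 - α) ^ 2 * N₂ ≤ q * (1 + α) ^ 2 := by rw [hq]; exact key
  nlinarith [mul_lt_mul_of_pos_right hβ hN₂, key2, key, hp2,
    mul_nonneg (mul_nonneg (mul_nonneg hβpos.le hm2.le) hN₂.le) hα0]
end

section
/- Let α, Δ, β, N₂, N₄ be real numbers with 0 ≤ α < 1, Δ ≥ 0, N₂ > 0, N₄ ≥ N₂/(1−α)^2, and β > ((1+Δ)·(1+α)^3 − (1−α)^3 + 1)·(1+α)^2/((2 − 2α + α^2)·(1−α)^2). Let J, Q, K be finite sets with Q ⊆ J, K ⊆ J, |J| ≤ (1+α)^3·N₂, |Q| ≥ β·(1−α)^4·N₄, and |K| ≥ β·(1−α)^4·N₄/(1+α)^2 − (1 − (1−α)^3 + Δ·(1+α)^3)·N₂ (cardinalities regarded as real numbers). Then Q ∩ K is nonempty. -/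
/-- Quorum-intersection conclusion of Case II of the paper's Lemma 14
(lem:lin5): the read quorum `Q` and the surviving write quorum `K` intersect. -/
theorem quorums_intersect
    {ι : Type*} [DecidableEq ι]
    (α Δ β N₂ N₄ : ℝ)
    (hα0 : 0 ≤ α) (hα1 : α < 1) (hΔ : 0 ≤ Δ)
    (hN₂ : 0 < N₂) (hN₄ : N₂ / (1 - α) ^ 2 ≤ N₄)
    (hβ : ((1 + Δ) * (1 + α) ^ 3 - (1 - α) ^ 3 + 1) * (1 + α) ^ 2 /
        ((2 - 2 * α + α ^ 2) * (1 - α) ^ 2) < β)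
    (J Q K : Finset ι)
    (hQJ : Q ⊆ J) (hKJ : K ⊆ J)
    (hJ : (J.card : ℝ) ≤ (1 + α) ^ 3 * N₂)
    (hQ : β * (1 - α) ^ 4 * N₄ ≤ (Q.card : ℝ))
    (hK : β * (1 - α) ^ 4 * N₄ / (1 + α) ^ 2 -
        (1 - (1 - α) ^ 3 + Δ * (1 + α) ^ 3) * N₂ ≤ (K.card : ℝ)) :
    (Q ∩ K).Nonempty := by
  have h1a : (0:ℝ) < 1 - α := by linarith
  have h1b : (0:ℝ) < 1 + α := by linarith
  have hden1 : (0:ℝ) < 2 - 2 * α + α ^ 2 := by nlinarith [sq_nonneg (1 - α)]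
  have hden : (0:ℝ) < (2 - 2 * α + α ^ 2) * (1 - α) ^ 2 := mul_pos hden1 (pow_pos h1a 2)
  have hnum0 : (0:ℝ) ≤ (1 + Δ) * (1 + α) ^ 3 - (1 - α) ^ 3 + 1 := by
    nlinarith [mul_nonneg hΔ (pow_pos h1b 3).le, pow_nonneg hα0 3, mul_nonneg (mul_nonneg hα0 hα0) hα0]
  have hnum : (0:ℝ) ≤ ((1 + Δ) * (1 + α) ^ 3 - (1 - α) ^ 3 + 1) * (1 + α) ^ 2 :=
    mul_nonneg hnum0 (pow_nonneg h1b.le 2)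
  have hβ0 : 0 ≤ β := le_of_lt (lt_of_le_of_lt (le_div_iff₀ hden |>.mpr (by linarith [hnum])) hβ)
  have hβ' : ((1 + Δ) * (1 + α) ^ 3 - (1 - α) ^ 3 + 1) * (1 + α) ^ 2
      < β * ((2 - 2 * α + α ^ 2) * (1 - α) ^ 2) := (div_lt_iff₀ hden).mp hβ
  have hN₄' : N₂ ≤ N₄ * (1 - α) ^ 2 := (div_le_iff₀ (by positivity)).mp hN₄
  obtain ⟨x, hxdef⟩ : ∃ x : ℝ, x = β * (1 - α) ^ 2 * N₂ := ⟨_, rfl⟩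
  have hx0 : 0 ≤ x := hxdef ▸ by positivity
  have hxQ : x ≤ β * (1 - α) ^ 4 * N₄ := by rw [hxdef]; nlinarith [mul_nonneg (mul_nonneg hβ0 (sq_nonneg (1-α))) (sub_nonneg.mpr hN₄')]
  have hQ' : x ≤ (Q.card : ℝ) := le_trans hxQ hQ
  have hp2 : (0:ℝ) < (1 + α) ^ 2 := by positivity
  have hK' : x - (1 - (1 - α) ^ 3 + Δ * (1 + α) ^ 3) * N₂ * (1 + α) ^ 2
      ≤ (K.card : ℝ) * (1 + α) ^ 2 := by
    have h2 : x / (1 + α) ^ 2 ≤ β * (1 - α) ^ 4 * N₄ / (1 + α) ^ 2 := by gcongr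
    have h3 : x / (1 + α) ^ 2 - (1 - (1 - α) ^ 3 + Δ * (1 + α) ^ 3) * N₂ ≤ (K.card : ℝ) :=
      le_trans (by linarith) hK
    have h4 := mul_le_mul_of_nonneg_right h3 hp2.le
    calc x - (1 - (1 - α) ^ 3 + Δ * (1 + α) ^ 3) * N₂ * (1 + α) ^ 2
        = (x / (1 + α) ^ 2 - (1 - (1 - α) ^ 3 + Δ * (1 + α) ^ 3) * N₂) * (1 + α) ^ 2 := by
          field_simp
      _ ≤ (K.card : ℝ) * (1 + α) ^ 2 := h4
  have hβ'' := mul_lt_mul_of_pos_right hβ' hN₂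
  have e1 : β * ((2 - 2 * α + α ^ 2) * (1 - α) ^ 2) * N₂ = x * (2 - 2 * α + α ^ 2) := by
    rw [hxdef]; ring
  have e2 : ((1 + Δ) * (1 + α) ^ 3 - (1 - α) ^ 3 + 1) * (1 + α) ^ 2 * N₂
      = ((1 + α) ^ 3 * N₂ + (1 - (1 - α) ^ 3 + Δ * (1 + α) ^ 3) * N₂) * (1 + α) ^ 2 := by
    ring
  have e3 : x * (2 - 2 * α + α ^ 2) ≤ x * (1 + α) ^ 2 + x := by
    have := mul_nonneg hα0 hx0; nlinarith [this]
  have hQp := mul_le_mul_of_nonneg_right hQ' hp2.le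
  have hJp := mul_le_mul_of_nonneg_right hJ hp2.le
  have key : (J.card : ℝ) < (Q.card : ℝ) + (K.card : ℝ) := by
    have : (J.card : ℝ) * (1 + α) ^ 2 < ((Q.card : ℝ) + (K.card : ℝ)) * (1 + α) ^ 2 := by
      rw [e1, e2] at hβ''
      linarith
    exact lt_of_mul_lt_mul_right this hp2.le
  by_contra hne
  rw [Finset.not_nonempty_iff_eq_empty] at hne
  have hu : (Q ∪ K).card = Q.card + K.card :=
    Finset.card_union_of_disjoint (Finset.disjoint_iff_inter_eq_empty.mpr hne)
  have hle : Q.card + K.card ≤ J.card := hu ▸ Finset.card_le_card (Finset.union_subset hQJ hKJ)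
  have : ((Q.card + K.card : ℕ) : ℝ) ≤ (J.card : ℝ) := by exact_mod_cast hle
  push_cast at this
  linarith
end
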